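/- The operator G satisfies G(1) = b and G(a·v) = (1/2)·ω(a·v·b) for every ab-polynomial v. -/

import Mathlib

open scoped TensorProduct
open scoped Classical

noncomputable section

abbrev Alg : Type := MonoidAlgebra ℤ (FreeMonoid Bool)

def va : Alg := MonoidAlgebra.of ℤ (FreeMonoid Bool) (FreeMonoid.of false)
def vb : Alg := MonoidAlgebra.of ℤ (FreeMonoid Bool) (FreeMonoid.of true)

def monoOf (l : List Bool) : Alg := MonoidAlgebra.of ℤ (FreeMonoid Bool) (FreeMonoid.ofList l)

def toF (x : Alg) : FreeMonoid Bool →₀ ℤ := x.coeff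

/-- The weight of a chain encoded as a strictly increasing map `f : Fin (k+1) → P`. -/
def wtChain {P : Type} (ρ : P → ℕ) {k : ℕ} (f : Fin (k+1) → P) : Alg :=
  (List.ofFn (fun i : Fin k =>
    (va - vb) ^ (ρ (f i.succ) - ρ (f i.castSucc) - 1) *
      (if (i : ℕ) + 1 < k then vb else 1))).prod

def zetaChain {P : Type} (zb : P → P → ℤ) {k : ℕ} (f : Fin (k+1) → P) : ℤ :=
  ∏ i : Fin k, zb (f i.castSucc) (f i.succ)

/-- The ab-index of the interval `[lo, hi]` of a quasi-graded poset `(P, ρ, zb)`. -/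
def PsiI {P : Type} [Fintype P] [PartialOrder P] (ρ : P → ℕ) (zb : P → P → ℤ)
    (lo hi : P) : Alg :=
  ∑ k ∈ Finset.range (Fintype.card P + 1),
    ∑ f : Fin (k+1) → P,
      if StrictMono f ∧ f 0 = lo ∧ f (Fin.last k) = hi
      then zetaChain zb f • wtChain ρ f else 0

/-- The algebra map `κ` with `κ(a) = a - b`, `κ(b) = 0`. -/
def kappa : Alg →ₐ[ℤ] Alg :=
  MonoidAlgebra.lift ℤ Alg (FreeMonoid Bool)
    (FreeMonoid.lift (fun s => if s then 0 else va - vb))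

/-- The algebra map `λ̄` with `λ̄(a) = 0`, `λ̄(b) = a - b`. -/
def lambdabar : Alg →ₐ[ℤ] Alg :=
  MonoidAlgebra.lift ℤ Alg (FreeMonoid Bool)
    (FreeMonoid.lift (fun s => if s then va - vb else 0))

/-- `η` on monomials: `b^m a^k ↦ 2 (a-b)^(m+k)`, other monomials to `0`. -/
def etaMon (w : FreeMonoid Bool) : Alg :=
  if ∃ m k : ℕ, FreeMonoid.toList w = List.replicate m true ++ List.replicate k false
  then (2 : ℤ) • (va - vb) ^ (FreeMonoid.toList w).length else 0

def etaOp (x : Alg) : Alg := (toF x).sum fun w c => c • etaMon w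

/-- The letter-deletion coproduct on `Z⟨a,b⟩`. -/
def Delta (x : Alg) : Alg ⊗[ℤ] Alg :=
  (toF x).sum fun w c => c •
    ∑ i ∈ Finset.range (FreeMonoid.toList w).length,
      monoOf ((FreeMonoid.toList w).take i) ⊗ₜ[ℤ] monoOf ((FreeMonoid.toList w).drop (i+1))

/-- The Sweedler-style convolution `x ↦ Σ F(x₍₁₎) · b · G(x₍₂₎)`. -/
def sweedler (F G : Alg → Alg) (x : Alg) : Alg :=
  (toF x).sum fun w c => c •
    ∑ i ∈ Finset.range (FreeMonoid.toList w).length,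
      F (monoOf ((FreeMonoid.toList w).take i)) * vb *
        G (monoOf ((FreeMonoid.toList w).drop (i+1)))

/-- `phiAux n = φ_{n+1}`, defined by `φ₁ = κ` and `φ_{k+1}(w) = Σ φ_k(w₍₁₎) · b · η(w₍₂₎)`. -/
def phiAux : ℕ → Alg → Alg
  | 0 => fun x => kappa x
  | (n+1) => fun x => sweedler (phiAux n) etaOp x

def maxLen (x : Alg) : ℕ := (toF x).support.sup fun w => (FreeMonoid.toList w).length

/-- The operator `φ = Σ_{k ≥ 1} φ_k` (the sum is finite on any given polynomial). -/
def phi (x : Alg) : Alg := ∑ k ∈ Finset.range (maxLen x + 1), phiAux k x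

/-- `ω` on a monomial: replace each occurrence of `ab` by `2d` and remaining letters by `c`. -/
def omegaList : List Bool → Alg
  | [] => 1
  | false :: true :: rest => ((2:ℤ) • (va * vb + vb * va)) * omegaList rest
  | _ :: rest => (va + vb) * omegaList rest

def omegaOp (x : Alg) : Alg := (toF x).sum fun w c => c • omegaList (FreeMonoid.toList w)

/-- The operator `G(w) = φ(w)·b + Σ φ(w₍₁₎)·b·λ̄(w₍₂₎)·(a-b)`. -/
def Gop (w : Alg) : Alg := phi w * vb + sweedler phi (fun y => lambdabar y) w * (va - vb)

/-- The reversal map `u ↦ u*` reading each monomial backwards. -/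
def revOp (x : Alg) : Alg :=
  (toF x).sum fun w c =>
    MonoidAlgebra.single (FreeMonoid.ofList (FreeMonoid.toList w).reverse) c

/-- `H'` deletes the last letter of each monomial, `H'(1) = 0`. -/
def Hp (x : Alg) : Alg :=
  (toF x).sum fun w c => if w = 1 then 0 else c • monoOf ((FreeMonoid.toList w).dropLast)

end

/-! On monomials `φ` is the fixed point `φ = κ + Σ φ(w₍₁₎)·b·η(w₍₂₎)`. Splitting off the last
letter turns this into the recursions `φ(u·a) = φ(u)·c`, `φ(u·ab) = φ(u)·2d`, `φ(u·bb) = φ(u·b)·c`,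
which are those of `ω` (occurrences of `ab` cannot overlap), so `φ = ω` on monomials beginning with
`a`. The same splitting gives `2·G(u) = φ(u·b)` for every monomial `u`, by induction on `u`, and
both sides of the theorem are linear in `v`. -/

noncomputable section

lemma monoOf_append (l l' : List Bool) : monoOf (l ++ l') = monoOf l * monoOf l' := by
  simp only [monoOf, ← map_mul]
  rfl

lemma monoOf_nil : monoOf [] = 1 := rfl

lemma va_eq_monoOf : va = monoOf [false] := rfl

lemma vb_eq_monoOf : vb = monoOf [true] := rfl

lemma toF_monoOf (l : List Bool) : toF (monoOf l) = Finsupp.single (FreeMonoid.ofList l) 1 := rfl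

def linearExt (h : FreeMonoid Bool → Alg) : Alg →ₗ[ℤ] Alg :=
  Finsupp.linearCombination ℤ h ∘ₗ (MonoidAlgebra.coeffLinearEquiv ℤ).toLinearMap

lemma linearExt_apply (h : FreeMonoid Bool → Alg) (x : Alg) :
    linearExt h x = (toF x).sum fun w c => c • h w :=
  Finsupp.linearCombination_apply ℤ _

lemma linearExt_monoOf (h : FreeMonoid Bool → Alg) (l : List Bool) :
    linearExt h (monoOf l) = h (FreeMonoid.ofList l) := by
  rw [linearExt_apply, toF_monoOf, Finsupp.sum_single_index (zero_smul ℤ (h _)), one_smul]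

lemma etaOp_eq_linearExt : etaOp = linearExt etaMon := by
  ext x; rw [linearExt_apply]; rfl

lemma omegaOp_eq_linearExt : omegaOp = linearExt fun w => omegaList (FreeMonoid.toList w) := by
  ext x; rw [linearExt_apply]; rfl

lemma sweedler_eq_linearExt (F G : Alg → Alg) :
    sweedler F G = linearExt fun w => ∑ i ∈ Finset.range (FreeMonoid.toList w).length,
      F (monoOf ((FreeMonoid.toList w).take i)) * vb *
        G (monoOf ((FreeMonoid.toList w).drop (i + 1))) := by
  ext x; rw [linearExt_apply]; rfl

lemma sweedler_monoOf (F G : Alg → Alg) (l : List Bool) :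
    sweedler F G (monoOf l) = ∑ i ∈ Finset.range l.length,
      F (monoOf (l.take i)) * vb * G (monoOf (l.drop (i + 1))) := by
  rw [sweedler_eq_linearExt, linearExt_monoOf]; rfl

lemma sweedler_monoOf_concat {F G G' : Alg → Alg} {x : Bool} {r : Alg}
    (hG : ∀ v, G (monoOf (v ++ [x])) = G' (monoOf v) * r) (u : List Bool) :
    sweedler F G (monoOf (u ++ [x])) =
      sweedler F G' (monoOf u) * r + F (monoOf u) * vb * G 1 := by
  rw [sweedler_monoOf, sweedler_monoOf, List.length_append, List.length_singleton,
    Finset.sum_range_succ, Finset.sum_mul, List.take_left, List.drop_eq_nil_of_le (by simp)]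
  congr 1
  refine Finset.sum_congr rfl fun i hi => ?_
  rw [List.take_append_of_le_length (Finset.mem_range.1 hi).le,
    List.drop_append_of_le_length (Finset.mem_range.1 hi), hG, ← mul_assoc]

lemma algHom_monoOf_concat (f : Alg →ₐ[ℤ] Alg) (u : List Bool) (x : Bool) :
    f (monoOf (u ++ [x])) = f (monoOf u) * f (monoOf [x]) := by
  rw [monoOf_append, map_mul]

lemma kappa_monoOf_singleton (x : Bool) : kappa (monoOf [x]) = if x then 0 else va - vb := by
  simp [kappa, monoOf]

lemma lambdabar_monoOf_singleton (x : Bool) :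
    lambdabar (monoOf [x]) = if x then va - vb else 0 := by
  simp [lambdabar, monoOf]

lemma exists_replicate_concat_false (v : List Bool) :
    (∃ m k : ℕ, v ++ [false] = List.replicate m true ++ List.replicate k false) ↔
      ∃ m k : ℕ, v = List.replicate m true ++ List.replicate k false := by
  constructor
  · rintro ⟨m, _ | k, h⟩
    · rw [List.replicate_zero, List.append_nil] at h
      exact absurd (List.eq_of_mem_replicate (h ▸ List.mem_concat_self)) Bool.false_ne_true
    · rw [List.replicate_succ', ← List.append_assoc] at h
      exact ⟨m, k, List.append_inj_left' h rfl⟩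
  · rintro ⟨m, k, rfl⟩
    exact ⟨m, k + 1, by rw [List.replicate_succ', List.append_assoc]⟩

lemma exists_replicate_concat_true (v : List Bool) :
    (∃ m k : ℕ, v ++ [true] = List.replicate m true ++ List.replicate k false) ↔
      ∀ s ∈ v, s = true := by
  constructor
  · rintro ⟨m, _ | k, h⟩
    · rw [List.replicate_zero, List.append_nil] at h
      exact fun s hs => List.eq_of_mem_replicate (h ▸ List.mem_append_left [true] hs)
    · rw [List.replicate_succ', ← List.append_assoc] at h
      simpa using List.append_inj_right' h rfl
  · intro h
    refine ⟨v.length + 1, 0, ?_⟩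
    rw [List.replicate_succ', ← List.eq_replicate_iff.2 ⟨rfl, h⟩, List.replicate_zero,
      List.append_nil]

def etaBar : Alg →ₗ[ℤ] Alg :=
  linearExt fun w => if ∀ s ∈ FreeMonoid.toList w, s = true
    then (2 : ℤ) • (va - vb) ^ (FreeMonoid.toList w).length else 0

lemma etaOp_one : etaOp 1 = 2 := by
  rw [etaOp_eq_linearExt, ← monoOf_nil, linearExt_monoOf, etaMon, if_pos ⟨0, 0, rfl⟩]
  simp

lemma etaBar_one : etaBar 1 = 2 := by
  rw [etaBar, ← monoOf_nil, linearExt_monoOf]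
  simp

lemma ite_two_smul_pow_succ {P Q : Prop} [Decidable P] [Decidable Q] (hPQ : P ↔ Q) (n : ℕ) :
    (if P then (2 : ℤ) • (va - vb) ^ (n + 1) else 0) =
      (if Q then (2 : ℤ) • (va - vb) ^ n else 0) * (va - vb) := by
  by_cases hQ : Q
  · rw [if_pos (hPQ.2 hQ), if_pos hQ, pow_succ, smul_mul_assoc]
  · rw [if_neg (mt hPQ.1 hQ), if_neg hQ, zero_mul]

lemma etaOp_monoOf_concat_false (v : List Bool) :
    etaOp (monoOf (v ++ [false])) = etaOp (monoOf v) * (va - vb) := by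
  simp only [etaOp_eq_linearExt, linearExt_monoOf, etaMon, FreeMonoid.toList_ofList,
    List.length_append, List.length_singleton]
  exact ite_two_smul_pow_succ (exists_replicate_concat_false v) _

lemma etaOp_monoOf_concat_true (v : List Bool) :
    etaOp (monoOf (v ++ [true])) = etaBar (monoOf v) * (va - vb) := by
  simp only [etaOp_eq_linearExt, etaBar, linearExt_monoOf, etaMon, FreeMonoid.toList_ofList,
    List.length_append, List.length_singleton]
  exact ite_two_smul_pow_succ (exists_replicate_concat_true v) _

lemma etaBar_monoOf_concat (v : List Bool) (x : Bool) :
    etaBar (monoOf (v ++ [x])) = etaBar (monoOf v) * (if x then va - vb else 0) := by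
  simp only [etaBar, linearExt_monoOf, FreeMonoid.toList_ofList, List.length_append,
    List.length_singleton]
  cases x
  · rw [if_neg (by simp), if_neg Bool.false_ne_true, mul_zero]
  · rw [if_pos rfl]
    exact ite_two_smul_pow_succ (by simp) _

lemma maxLen_monoOf (l : List Bool) : maxLen (monoOf l) = l.length := by
  rw [maxLen, toF_monoOf, Finsupp.support_single _ one_ne_zero, Finset.sup_singleton]
  rfl

lemma phiAux_monoOf_eq_zero {n : ℕ} {l : List Bool} (h : l.length < n) :
    phiAux n (monoOf l) = 0 := by
  induction n generalizing l with
  | zero => omega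
  | succ n ih =>
    refine (sweedler_monoOf _ _ l).trans (Finset.sum_eq_zero fun i hi => ?_)
    rw [ih (by simp only [Finset.mem_range, List.length_take] at hi ⊢; omega), zero_mul, zero_mul]

lemma phiAux_eq_zero {n : ℕ} {x : Alg} (h : maxLen x < n) : phiAux n x = 0 := by
  obtain _ | n := n
  · omega
  show sweedler _ _ x = 0
  rw [sweedler_eq_linearExt, linearExt_apply]
  refine Finset.sum_eq_zero fun w hw =>
    smul_eq_zero_of_right _ (Finset.sum_eq_zero fun i hi => ?_)
  have hw : (FreeMonoid.toList w).length ≤ maxLen x := Finset.le_sup hw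
  rw [phiAux_monoOf_eq_zero (by simp only [Finset.mem_range, List.length_take] at hi ⊢; omega),
    zero_mul, zero_mul]

lemma isLinearMap_phiAux (n : ℕ) : IsLinearMap ℤ (phiAux n) := by
  obtain _ | n := n
  · exact kappa.toLinearMap.isLinear
  · show IsLinearMap ℤ (sweedler _ _)
    rw [sweedler_eq_linearExt]
    exact (linearExt _).isLinear

lemma phi_eq_sum_range {x : Alg} {N : ℕ} (h : maxLen x < N) :
    phi x = ∑ k ∈ Finset.range N, phiAux k x :=
  Finset.sum_subset (Finset.range_subset_range.2 h) fun k _ hk =>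
    phiAux_eq_zero (by simp only [Finset.mem_range] at hk; omega)

lemma isLinearMap_phi : IsLinearMap ℤ phi where
  map_add x y := by
    let N := maxLen x + maxLen y + maxLen (x + y) + 1
    rw [phi_eq_sum_range (N := N) (by omega), phi_eq_sum_range (N := N) (by omega),
      phi_eq_sum_range (N := N) (by omega), ← Finset.sum_add_distrib]
    exact Finset.sum_congr rfl fun k _ => (isLinearMap_phiAux k).map_add x y
  map_smul c x := by
    have h : maxLen (c • x) ≤ maxLen x := Finset.sup_mono Finsupp.support_smul
    rw [phi_eq_sum_range (N := maxLen x + 1) (by omega), phi, Finset.smul_sum]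
    exact Finset.sum_congr rfl fun k _ => (isLinearMap_phiAux k).map_smul c x

-- Summing `φₖ₊₁(w) = Σ φₖ(w₍₁₎)·b·η(w₍₂₎)` over `k`: the `φₖ` vanish on words shorter than `k`.
lemma phi_monoOf (l : List Bool) :
    phi (monoOf l) = kappa (monoOf l) + sweedler phi etaOp (monoOf l) := by
  rw [phi, maxLen_monoOf, Finset.sum_range_succ', add_comm, sweedler_monoOf]
  congr 1
  simp only [phiAux, sweedler_monoOf]
  rw [Finset.sum_comm]
  refine Finset.sum_congr rfl fun i hi => ?_
  rw [← Finset.sum_mul, ← Finset.sum_mul, ← phi_eq_sum_range]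
  rw [maxLen_monoOf, List.length_take]
  exact min_lt_of_left_lt (Finset.mem_range.1 hi)

lemma phi_one : phi 1 = 1 := by
  rw [← monoOf_nil, phi_monoOf, sweedler_monoOf, monoOf_nil, map_one]
  simp

lemma phi_monoOf_concat_false (u : List Bool) :
    phi (monoOf (u ++ [false])) = phi (monoOf u) * (va + vb) :=
  calc phi (monoOf (u ++ [false]))
      = (kappa (monoOf u) + sweedler phi etaOp (monoOf u)) * (va - vb) +
          phi (monoOf u) * vb * 2 := by
        rw [phi_monoOf, algHom_monoOf_concat, kappa_monoOf_singleton,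
          sweedler_monoOf_concat etaOp_monoOf_concat_false, etaOp_one, if_neg Bool.false_ne_true,
          add_mul, add_assoc]
    _ = phi (monoOf u) * (va + vb) := by
        rw [← phi_monoOf]
        noncomm_ring

lemma phi_monoOf_concat_true (u : List Bool) :
    phi (monoOf (u ++ [true])) =
      sweedler phi etaBar (monoOf u) * (va - vb) + phi (monoOf u) * vb * 2 := by
  rw [phi_monoOf, algHom_monoOf_concat, kappa_monoOf_singleton, if_pos rfl, mul_zero, zero_add,
    sweedler_monoOf_concat etaOp_monoOf_concat_true, etaOp_one]

lemma sweedler_etaBar_monoOf_concat_false (u : List Bool) :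
    sweedler phi etaBar (monoOf (u ++ [false])) = phi (monoOf u) * vb * 2 := by
  rw [sweedler_monoOf_concat (fun v => etaBar_monoOf_concat v false), etaBar_one,
    if_neg Bool.false_ne_true, mul_zero, zero_add]

lemma sweedler_etaBar_monoOf_concat_true (u : List Bool) :
    sweedler phi etaBar (monoOf (u ++ [true])) = phi (monoOf (u ++ [true])) := by
  rw [sweedler_monoOf_concat (fun v => etaBar_monoOf_concat v true), etaBar_one, if_pos rfl,
    phi_monoOf_concat_true]

lemma phi_monoOf_append_ab (u : List Bool) :
    phi (monoOf (u ++ [false, true])) = phi (monoOf u) * ((2 : ℤ) • (va * vb + vb * va)) := by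
  rw [← List.singleton_append, ← List.append_assoc, phi_monoOf_concat_true,
    sweedler_etaBar_monoOf_concat_false, phi_monoOf_concat_false, two_zsmul]
  noncomm_ring

lemma phi_monoOf_append_bb (u : List Bool) :
    phi (monoOf (u ++ [true, true])) = phi (monoOf (u ++ [true])) * (va + vb) := by
  rw [← List.singleton_append, ← List.append_assoc, phi_monoOf_concat_true,
    sweedler_etaBar_monoOf_concat_true]
  noncomm_ring

-- The hypothesis rules out an `ab` straddling the junction.
lemma omegaList_append {l l' : List Bool}
    (h : l.getLast? = some false → l'.head? ≠ some true) :
    omegaList (l ++ l') = omegaList l * omegaList l' := by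
  induction l using omegaList.induct with
  | case1 => rw [List.nil_append, omegaList, one_mul]
  | case2 rest ih =>
    rw [List.cons_append, List.cons_append, omegaList, omegaList, ih, mul_assoc]
    intro hrest
    cases rest with
    | nil => simp at hrest
    | cons => exact h (by simpa using hrest)
  | case3 x rest hx ih =>
    have ih := ih fun hrest => h (by cases rest <;> simp_all)
    rw [List.cons_append, omegaList.eq_3 x rest hx, omegaList.eq_3, ih, mul_assoc]
    rintro rest' rfl hrest'
    cases rest with
    | nil => exact h rfl (by simp_all)
    | cons y rest => exact hx rest rfl (by simp_all)

lemma phi_eq_omegaList_concat_false_of_eq {u : List Bool} (hu : phi (monoOf u) = omegaList u) :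
    phi (monoOf (u ++ [false])) = omegaList (u ++ [false]) ∧
      phi (monoOf (u ++ [false] ++ [true])) = omegaList (u ++ [false] ++ [true]) := by
  rw [List.append_assoc, List.singleton_append, phi_monoOf_concat_false, phi_monoOf_append_ab,
    hu, omegaList_append (by simp), omegaList_append (by simp)]
  simp [omegaList]

lemma phi_eq_omegaList_cons_false (v : List Bool) :
    phi (monoOf (false :: v)) = omegaList (false :: v) ∧
      phi (monoOf (false :: v ++ [true])) = omegaList (false :: v ++ [true]) := by
  induction v using List.reverseRecOn with
  | nil => exact phi_eq_omegaList_concat_false_of_eq (u := []) (monoOf_nil ▸ phi_one)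
  | append_singleton v x ih =>
    rw [← List.cons_append]
    cases x with
    | false => exact phi_eq_omegaList_concat_false_of_eq ih.1
    | true =>
      refine ⟨ih.2, ?_⟩
      rw [List.append_assoc, List.singleton_append, phi_monoOf_append_bb, ih.2,
        show false :: v ++ [true, true] = false :: v ++ [true] ++ [true] by simp,
        omegaList_append (l := false :: v ++ [true]) (by simp [List.getLast?_cons])]
      simp [omegaList]

lemma sweedler_one (F G : Alg → Alg) : sweedler F G 1 = 0 := by
  rw [← monoOf_nil, sweedler_monoOf, List.length_nil, Finset.sum_range_zero]

lemma lambdabar_monoOf_concat (v : List Bool) (x : Bool) :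
    lambdabar (monoOf (v ++ [x])) = lambdabar (monoOf v) * (if x then va - vb else 0) := by
  rw [algHom_monoOf_concat, lambdabar_monoOf_singleton]

lemma Gop_monoOf_concat_false (u : List Bool) :
    Gop (monoOf (u ++ [false])) =
      phi (monoOf (u ++ [false])) * vb + phi (monoOf u) * vb * (va - vb) := by
  rw [Gop, sweedler_monoOf_concat (fun v => lambdabar_monoOf_concat v false), map_one,
    if_neg Bool.false_ne_true, mul_zero, zero_add, mul_one]

lemma Gop_monoOf_concat_true (u : List Bool) :
    Gop (monoOf (u ++ [true])) =
      phi (monoOf (u ++ [true])) * vb + Gop (monoOf u) * (va - vb) := by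
  rw [Gop, Gop, sweedler_monoOf_concat (fun v => lambdabar_monoOf_concat v true), map_one,
    if_pos rfl, mul_one]
  noncomm_ring

lemma two_smul_Gop_monoOf (u : List Bool) :
    (2 : ℤ) • Gop (monoOf u) = phi (monoOf (u ++ [true])) := by
  induction u using List.reverseRecOn with
  | nil =>
    rw [Gop, List.nil_append, ← List.nil_append [true], phi_monoOf_concat_true, monoOf_nil,
      sweedler_one, sweedler_one, phi_one, two_zsmul]
    noncomm_ring
  | append_singleton u x ih =>
    cases x with
    | false =>
      rw [Gop_monoOf_concat_false, phi_monoOf_concat_true, sweedler_etaBar_monoOf_concat_false,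
        two_zsmul]
      noncomm_ring
    | true =>
      rw [Gop_monoOf_concat_true, smul_add, ← smul_mul_assoc (2 : ℤ) (Gop _), ih,
        List.append_assoc, List.singleton_append, phi_monoOf_append_bb, two_zsmul]
      noncomm_ring

lemma isLinearMap_Gop : IsLinearMap ℤ Gop where
  map_add x y := by
    rw [Gop, Gop, Gop, isLinearMap_phi.map_add, sweedler_eq_linearExt, map_add]
    noncomm_ring
  map_smul c x := by
    rw [Gop, Gop, isLinearMap_phi.map_smul, sweedler_eq_linearExt, map_zsmul, smul_mul_assoc,
      smul_mul_assoc, smul_add]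

lemma eq_of_forall_monoOf {f g : Alg → Alg} (hf : IsLinearMap ℤ f) (hg : IsLinearMap ℤ g)
    (h : ∀ l, f (monoOf l) = g (monoOf l)) (x : Alg) : f x = g x := by
  induction x using MonoidAlgebra.induction_on with
  | of w => exact h (FreeMonoid.toList w)
  | add x y hx hy => rw [hf.map_add, hg.map_add, hx, hy]
  | smul c x hx => rw [hf.map_smul, hg.map_smul, hx]

/-- `G(1) = b` and `G(a·v) = (1/2)·ω(a·v·b)`, the latter stated
integrally as `2·G(a·v) = ω(a·v·b)`. -/
theorem G_eval :
    Gop 1 = vb ∧ ∀ v : Alg, (2 : ℤ) • Gop (va * v) = omegaOp (va * v * vb) := by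
  refine ⟨by rw [Gop, phi_one, sweedler_one, one_mul, zero_mul, add_zero], ?_⟩
  have hGop : IsLinearMap ℤ fun v => (2 : ℤ) • Gop (va * v) :=
    ⟨fun x y => by rw [mul_add, isLinearMap_Gop.map_add, smul_add],
      fun c x => by rw [mul_smul_comm, isLinearMap_Gop.map_smul, smul_comm]⟩
  have hOmega : IsLinearMap ℤ fun v => omegaOp (va * v * vb) :=
    ⟨fun x y => by rw [omegaOp_eq_linearExt, mul_add, add_mul, map_add],
      fun c x => by rw [omegaOp_eq_linearExt, mul_smul_comm, smul_mul_assoc, map_zsmul]⟩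
  refine eq_of_forall_monoOf hGop hOmega fun l => ?_
  rw [va_eq_monoOf, vb_eq_monoOf, ← monoOf_append, ← monoOf_append, two_smul_Gop_monoOf,
    omegaOp_eq_linearExt, linearExt_monoOf, FreeMonoid.toList_ofList]
  exact (phi_eq_omegaList_cons_false l).2

end
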